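/- For every n ≥ 1 and every probability distribution p = (p_1, ..., p_n) with p_1 ≥ ... ≥ p_n > 0 and Σ p_i = 1, the guessing entropy satisfies E[G(p)] ≥ (1/e)·2^{H(p) + p_n} - p_n/2 + 1/2. -/

import Mathlib

/-- Shannon entropy in bits. -/
noncomputable def shannonEntropy {n : ℕ} (p : Fin n → ℝ) : ℝ :=
  -∑ i, p i * Real.logb 2 (p i)

/-- Guessing entropy: expected number of guesses (indices counted from 1). -/
noncomputable def guessingEntropy {n : ℕ} (p : Fin n → ℝ) : ℝ :=
  ∑ i : Fin n, (((i : ℕ) : ℝ) + 1) * p i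

/-- Binary entropy function (in bits). -/
noncomputable def binaryEntropy (α : ℝ) : ℝ :=
  -α * Real.logb 2 α - (1 - α) * Real.logb 2 (1 - α)

/-!
Splitting the last atom `t = p_n` of `p` into two atoms `t/2` gives a distribution `q` on
`n + 1` points whose entropy (in nats) is `H(p) log 2 + t log 2` and whose mean position, with the
atoms placed at `1/2, 3/2, 5/2, …`, is `E[G(p)] - 1/2 + t/2`. Among distributions on these
positions with mean `M`, entropy is at most `1 + log M`: this is Gibbs' inequality against the
discretised exponential density `λ e^{-λ x}`, `λ = 1/M`, whose total mass is at most `1` because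
`λ e^{-λ/2} ≤ 1 - e^{-λ}` (that is, `λ ≤ 2 sinh (λ/2)`). Exponentiating gives the bound.
-/

open Real Finset

lemma mul_exp_neg_half_le_one_sub_exp_neg {l : ℝ} (hl : 0 ≤ l) :
    l * exp (-(l / 2)) ≤ 1 - exp (-l) := by
  have hsinh : l ≤ exp (l / 2) - exp (-(l / 2)) := by
    have := (self_le_sinh_iff (x := l / 2)).2 (by linarith)
    rw [sinh_eq] at this
    linarith
  have hsq : exp (-(l / 2)) * exp (-(l / 2)) = exp (-l) := by rw [← exp_add]; ring_nf
  have hone : exp (l / 2) * exp (-(l / 2)) = 1 := by rw [← exp_add]; simp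
  nlinarith [mul_le_mul_of_nonneg_right hsinh (exp_pos (-(l / 2))).le]

/-- **Gibbs' inequality**, for a sub-probability vector `r`. -/
lemma sum_mul_log_le_sum_mul_log {ι : Type*} [Fintype ι] {q r : ι → ℝ}
    (hq : ∀ i, 0 < q i) (hr : ∀ i, 0 < r i) (hrq : ∑ i, r i ≤ ∑ i, q i) :
    ∑ i, q i * log (r i) ≤ ∑ i, q i * log (q i) := by
  have hterm : ∀ i, q i * log (r i) - q i * log (q i) ≤ r i - q i := fun i => by
    have h := log_le_sub_one_of_pos (div_pos (hr i) (hq i))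
    rw [log_div (hr i).ne' (hq i).ne'] at h
    have := mul_le_mul_of_nonneg_left h (hq i).le
    rwa [mul_sub, mul_sub, mul_div_cancel₀ _ (hq i).ne', mul_one] at this
  have := Finset.sum_le_sum fun i (_ : i ∈ univ) => hterm i
  rw [Finset.sum_sub_distrib, Finset.sum_sub_distrib] at this
  linarith

/-- The discretised exponential density `l e^{-l x}` at the half-integer `x = i + 1/2`. -/
noncomputable def expWeight (l : ℝ) (i : ℕ) : ℝ :=
  l * exp (-(l * (i + 1 / 2)))

lemma expWeight_pos {l : ℝ} (hl : 0 < l) (i : ℕ) : 0 < expWeight l i := by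
  unfold expWeight; positivity

lemma log_expWeight {l : ℝ} (hl : 0 < l) (i : ℕ) :
    log (expWeight l i) = log l - l * (i + 1 / 2) := by
  rw [expWeight, log_mul hl.ne' (exp_pos _).ne', log_exp]; ring

lemma sum_expWeight_le_one {l : ℝ} (hl : 0 < l) (k : ℕ) :
    ∑ i ∈ range k, expWeight l i ≤ 1 := by
  have hgeom : ∀ i : ℕ, expWeight l i = l * exp (-(l / 2)) * exp (-l) ^ i := fun i => by
    rw [expWeight, ← exp_nat_mul, mul_assoc, ← exp_add]; ring_nf
  calc ∑ i ∈ range k, expWeight l i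
      = l * exp (-(l / 2)) * ∑ i ∈ range k, exp (-l) ^ i := by
        simp only [hgeom, Finset.mul_sum]
    _ ≤ (1 - exp (-l)) * ∑ i ∈ range k, exp (-l) ^ i := by
        gcongr
        exact mul_exp_neg_half_le_one_sub_exp_neg hl.le
    _ = 1 - exp (-l) ^ k := mul_neg_geom_sum _ _
    _ ≤ 1 := sub_le_self _ (pow_nonneg (exp_pos _).le _)

lemma half_le_sum_mul_add_half {k : ℕ} {q : Fin k → ℝ} (hq : ∀ i, 0 ≤ q i)
    (hsum : ∑ i, q i = 1) : 1 / 2 ≤ ∑ i : Fin k, ((i : ℝ) + 1 / 2) * q i :=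
  calc 1 / 2 = ∑ i : Fin k, 1 / 2 * q i := by rw [← Finset.mul_sum, hsum, mul_one]
    _ ≤ _ := Finset.sum_le_sum fun i _ =>
      mul_le_mul_of_nonneg_right (by linarith [(i : ℕ).cast_nonneg (α := ℝ)]) (hq i)

lemma neg_sum_mul_log_le_one_add_log_mean {k : ℕ} {q : Fin k → ℝ} (hq : ∀ i, 0 < q i)
    (hsum : ∑ i, q i = 1) :
    -∑ i, q i * log (q i) ≤ 1 + log (∑ i : Fin k, ((i : ℝ) + 1 / 2) * q i) := by
  set M := ∑ i : Fin k, ((i : ℝ) + 1 / 2) * q i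
  have hM : 0 < M :=
    lt_of_lt_of_le (by norm_num) (half_le_sum_mul_add_half (fun i => (hq i).le) hsum)
  have hcross : ∑ i, q i * log (expWeight M⁻¹ i) = -(1 + log M) := by
    simp only [log_expWeight (inv_pos.2 hM), mul_sub, Finset.sum_sub_distrib, ← Finset.sum_mul,
      hsum, log_inv]
    have : ∑ i : Fin k, q i * (M⁻¹ * ((i : ℝ) + 1 / 2)) = M⁻¹ * M := by
      rw [Finset.mul_sum]; exact Finset.sum_congr rfl fun i _ => by ring
    rw [this, inv_mul_cancel₀ hM.ne']; ring
  have hgibbs := sum_mul_log_le_sum_mul_log hq (fun i => expWeight_pos (inv_pos.2 hM) i)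
    (by rw [hsum, Fin.sum_univ_eq_sum_range (expWeight M⁻¹)]
        exact sum_expWeight_le_one (inv_pos.2 hM) k)
  linarith

noncomputable def splitLast {m : ℕ} (p : Fin (m + 1) → ℝ) : Fin (m + 2) → ℝ :=
  Fin.snoc (Function.update p (Fin.last m) (p (Fin.last m) / 2)) (p (Fin.last m) / 2)

lemma splitLast_pos {m : ℕ} {p : Fin (m + 1) → ℝ} (hp : ∀ i, 0 < p i) (i : Fin (m + 2)) :
    0 < splitLast p i := by
  induction i using Fin.lastCases with
  | last => simpa [splitLast] using hp _
  | cast j =>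
    rw [splitLast, Fin.snoc_castSucc]
    rcases eq_or_ne j (Fin.last m) with rfl | hj
    · simpa using hp _
    · rw [Function.update_of_ne hj]; exact hp j

lemma sum_splitLast {m : ℕ} (F : ℕ → ℝ → ℝ) (p : Fin (m + 1) → ℝ) :
    ∑ i : Fin (m + 2), F i (splitLast p i) =
      ∑ i : Fin (m + 1), F i (p i) - F m (p (Fin.last m)) + F m (p (Fin.last m) / 2) +
        F (m + 1) (p (Fin.last m) / 2) := by
  have hinit : ∀ i : Fin m, Function.update p (Fin.last m) (p (Fin.last m) / 2) i.castSucc =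
      p i.castSucc := fun i => Function.update_of_ne (Fin.castSucc_lt_last i).ne _ _
  simp only [Fin.sum_univ_castSucc (n := m + 1), splitLast, Fin.snoc_castSucc, Fin.snoc_last,
    Fin.sum_univ_castSucc (n := m), hinit, Function.update_self, Fin.val_castSucc, Fin.val_last]
  ring

lemma sum_splitLast_mul_log {m : ℕ} (p : Fin (m + 1) → ℝ) (hp : p (Fin.last m) ≠ 0) :
    ∑ i, splitLast p i * log (splitLast p i) =
      ∑ i, p i * log (p i) - p (Fin.last m) * log 2 := by
  rw [sum_splitLast (fun _ x => x * log x), log_div hp two_ne_zero]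
  ring

lemma sum_mul_splitLast {m : ℕ} (p : Fin (m + 1) → ℝ) (hsum : ∑ i, p i = 1) :
    ∑ i : Fin (m + 2), ((i : ℝ) + 1 / 2) * splitLast p i =
      guessingEntropy p - 1 / 2 + p (Fin.last m) / 2 := by
  rw [sum_splitLast (fun j x => ((j : ℝ) + 1 / 2) * x), guessingEntropy]
  have : ∑ i : Fin (m + 1), ((i : ℝ) + 1 / 2) * p i =
      ∑ i : Fin (m + 1), ((i : ℝ) + 1) * p i - 1 / 2 * ∑ i, p i := by
    rw [Finset.mul_sum, ← Finset.sum_sub_distrib]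
    exact Finset.sum_congr rfl fun i _ => by ring
  rw [this, hsum]
  push_cast
  ring

lemma shannonEntropy_mul_log_two {n : ℕ} (p : Fin n → ℝ) :
    shannonEntropy p * log 2 = -∑ i, p i * log (p i) := by
  have hlog2 : log 2 ≠ 0 := (log_pos one_lt_two).ne'
  simp only [shannonEntropy, neg_mul, Finset.sum_mul, logb, mul_assoc,
    div_mul_cancel₀ _ hlog2]

theorem refined_rioul_half (n : ℕ) (hn : 1 ≤ n) (p : Fin n → ℝ)
    (hpos : ∀ i, 0 < p i)
    (hsum : ∑ i, p i = 1) :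
    guessingEntropy p ≥
      (1 / Real.exp 1) * (2 : ℝ) ^ (shannonEntropy p + p ⟨n - 1, by omega⟩) -
        p ⟨n - 1, by omega⟩ / 2 + 1 / 2 := by
  obtain ⟨m, rfl⟩ : ∃ m, n = m + 1 := ⟨n - 1, by omega⟩
  change _ ≥ _ * 2 ^ (_ + p (Fin.last m)) - p (Fin.last m) / 2 + _
  set t := p (Fin.last m)
  have hsplit_pos := splitLast_pos hpos
  have hsplit_sum : ∑ i, splitLast p i = 1 := by
    rw [sum_splitLast (fun _ x => x), hsum]; ring
  have hmean_pos : 0 < guessingEntropy p - 1 / 2 + t / 2 := by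
    rw [← sum_mul_splitLast p hsum]
    exact lt_of_lt_of_le (by norm_num)
      (half_le_sum_mul_add_half (fun i => (hsplit_pos i).le) hsplit_sum)
  have hmaxent := neg_sum_mul_log_le_one_add_log_mean hsplit_pos hsplit_sum
  rw [sum_splitLast_mul_log p (hpos _).ne', sum_mul_splitLast p hsum] at hmaxent
  have hbits :
      (2 : ℝ) ^ (shannonEntropy p + t) ≤ exp 1 * (guessingEntropy p - 1 / 2 + t / 2) := by
    rw [rpow_def_of_pos two_pos, ← exp_log hmean_pos, ← exp_add]
    exact exp_le_exp.2 (by linarith [shannonEntropy_mul_log_two p])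
  rw [ge_iff_le, one_div]
  linarith [(inv_mul_le_iff₀ (exp_pos 1)).2 hbits]
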